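/- In the new code of length n constructed from a cyclic Gray code of length n-1, the near-2 Hamming distance satisfies: d_H(x_{k mod 2p}, x_{(k+2) mod 2p}) = 1 if k mod p ∈ {p-2, p-1}, and equals 2 otherwise. -/

import Mathlib

/-!
Two codewords `x_k` and `x_(k+2)` have the same prefix bit and are either both plain or both
complemented, so their distance is that of the Gray code words `y_i` and `y_i'` they are built
from, where `i = min k (2p-1-k)` folds the reflected second half back onto the first. Folding
moves the index by exactly 2, except across the two turning points, i.e. for
`k ≡ p-2, p-1 (mod p)`, where it moves by 1. Gray code words one step apart are at distance 1;
two steps apart they are distinct words at distance at most 2, and the Hamming distance between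
binary words is additive modulo 2, so they are at distance exactly 2.
-/

/-- The new counting code of length `m+1` built from a cyclic Gray code
`y` on `m`-bit words: the Gray code followed by its reversal, with every
codeword at an odd position bitwise complemented, and alternating prefix
bits `0,1,0,1,...` prepended. -/
def newCode (m : ℕ) (y : Fin (2^m) → Fin m → Bool) :
    Fin (2 * 2^m) → Fin (m+1) → Bool := fun k =>
  Fin.cons (decide (k.val % 2 = 1))
    (fun i =>
      let j : Fin (2^m) := ⟨min k.val (2 * 2^m - 1 - k.val), by
        have hk := k.isLt
        have h1 : 1 ≤ 2^m := Nat.one_le_two_pow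
        omega⟩
      if k.val % 2 = 0 then y j i else !(y j i))

open Function

section HammingBool

variable {ι : Type*} [Fintype ι]

theorem hammingDist_cast_zmod_two_eq_add (a b c : ι → Bool) :
    (hammingDist a c : ZMod 2) = hammingDist a b + hammingDist b c := by
  simp only [hammingDist, Finset.card_filter, Nat.cast_sum, ← Finset.sum_add_distrib]
  refine Finset.sum_congr rfl fun i _ => ?_
  cases a i <;> cases b i <;> cases c i <;> decide

theorem hammingDist_eq_two_of_eq_one_of_eq_one {a b c : ι → Bool} (hab : hammingDist a b = 1)
    (hbc : hammingDist b c = 1) (hac : a ≠ c) : hammingDist a c = 2 := by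
  have hle := hammingDist_triangle a b c
  have hpos := hammingDist_pos.mpr hac
  have hpar := hammingDist_cast_zmod_two_eq_add a b c
  rw [hab, hbc] at hpar
  obtain h | h : hammingDist a c = 1 ∨ hammingDist a c = 2 := by omega
  · rw [h] at hpar; exact absurd hpar (by decide)
  · exact h

end HammingBool

section GrayCode

variable {n : ℕ} [NeZero n] {ι : Type*} [Fintype ι] {y : Fin n → ι → Bool}

theorem hammingDist_eq_one_of_val_eq_add_one
    (hgray : ∀ k : Fin n, hammingDist (y k) (y (k + 1)) = 1) {a b : Fin n}
    (hab : b.val = a.val + 1) : hammingDist (y a) (y b) = 1 := by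
  have hb : b = a + 1 := by
    ext
    rw [Fin.val_add, Fin.val_one', Nat.add_mod_mod, ← hab, Nat.mod_eq_of_lt b.isLt]
  exact hb ▸ hgray a

theorem hammingDist_eq_two_of_val_eq_add_two (hy : Injective y)
    (hgray : ∀ k : Fin n, hammingDist (y k) (y (k + 1)) = 1) {a c : Fin n}
    (hac : c.val = a.val + 2) : hammingDist (y a) (y c) = 2 := by
  let b : Fin n := ⟨a.val + 1, by omega⟩
  refine hammingDist_eq_two_of_eq_one_of_eq_one (b := y b)
    (hammingDist_eq_one_of_val_eq_add_one hgray rfl)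
    (hammingDist_eq_one_of_val_eq_add_one hgray (by simp [b, hac])) ?_
  exact hy.ne (Fin.ne_of_val_ne (by omega))

theorem hammingDist_eq_dist_of_dist_le_two (hy : Injective y)
    (hgray : ∀ k : Fin n, hammingDist (y k) (y (k + 1)) = 1) {a b : Fin n}
    (h₁ : 1 ≤ Nat.dist a b) (h₂ : Nat.dist a b ≤ 2) :
    hammingDist (y a) (y b) = Nat.dist a b := by
  wlog hab : a.val ≤ b.val generalizing a b
  · rw [Nat.dist_comm] at h₁ h₂ ⊢
    rw [hammingDist_comm]
    exact this h₁ h₂ (by omega)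
  rw [Nat.dist_eq_sub_of_le hab] at h₁ h₂ ⊢
  obtain h | h : b.val = a.val + 1 ∨ b.val = a.val + 2 := by omega
  · rw [hammingDist_eq_one_of_val_eq_add_one hgray h]; omega
  · rw [hammingDist_eq_two_of_val_eq_add_two hy hgray h]; omega

end GrayCode

def foldIndex {p : ℕ} (k : Fin (2 * p)) : Fin p :=
  ⟨min k.val (2 * p - 1 - k.val), by have := k.isLt; omega⟩

theorem dist_foldIndex_of_val_eq_add_two_mod {p : ℕ} (hp : 2 ≤ p) {k k' : Fin (2 * p)}
    (hk' : k'.val = (k.val + 2) % (2 * p)) :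
    Nat.dist (foldIndex k) (foldIndex k') =
      if k.val % p = p - 2 ∨ k.val % p = p - 1 then 1 else 2 := by
  have hk := k.isLt
  have hk'_lt := k'.isLt
  have hk_mod_lt := Nat.mod_lt k.val (by omega : 0 < p)
  have hk'_cases : k'.val = k.val + 2 ∨ k'.val + 2 * p = k.val + 2 := by
    rcases Nat.lt_or_ge (k.val + 2) (2 * p) with h | h
    · left; rw [hk', Nat.mod_eq_of_lt h]
    · right; rw [hk', Nat.mod_eq_sub_mod h, Nat.mod_eq_of_lt (by omega)]; omega
  have hk_mod : k.val % p = k.val ∨ k.val % p + p = k.val := by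
    rcases Nat.lt_or_ge k.val p with h | h
    · left; exact Nat.mod_eq_of_lt h
    · right; rw [Nat.mod_eq_sub_mod h, Nat.mod_eq_of_lt (by omega)]; omega
  simp only [foldIndex, Nat.dist]
  split_ifs <;> omega

theorem newCode_eq_cons (m : ℕ) (y : Fin (2^m) → Fin m → Bool) (k : Fin (2 * 2^m)) :
    newCode m y k =
      Fin.cons (decide (k.val % 2 = 1))
        fun i => xor (decide (k.val % 2 = 1)) (y (foldIndex k) i) := by
  ext i
  refine Fin.cases ?_ (fun j => ?_) i
  · rfl
  · rcases Nat.mod_two_eq_zero_or_one k.val with h | h <;> simp [newCode, foldIndex, h]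

theorem hammingDist_cons_cons {m : ℕ} {β : Type*} [DecidableEq β] (a : β)
    (f g : Fin m → β) :
    hammingDist (Fin.cons a f : Fin (m + 1) → β) (Fin.cons a g) = hammingDist f g := by
  simp [hammingDist, Finset.card_filter, Fin.sum_univ_succ]

theorem hammingDist_newCode_of_mod_two_eq (m : ℕ) (y : Fin (2^m) → Fin m → Bool)
    {k k' : Fin (2 * 2^m)} (h : k.val % 2 = k'.val % 2) :
    hammingDist (newCode m y k) (newCode m y k') =
      hammingDist (y (foldIndex k)) (y (foldIndex k')) := by
  rw [newCode_eq_cons, newCode_eq_cons, h, hammingDist_cons_cons,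
    hammingDist_comp (fun _ => xor _) fun _ _ _ => Bool.xor_right_inj.mp]

/-- In the new code of length `n = m+1` built from a cyclic Gray code
on `m`-bit words (`p = 2^m`), the near-2 Hamming distance equals `1` when
`k mod p ∈ {p-2, p-1}` and `2` otherwise. -/
theorem newCode_near2_dist (m : ℕ) (hm : 1 ≤ m) (y : Fin (2^m) → Fin m → Bool)
    (hy : Function.Bijective y)
    (hgray : ∀ k : Fin (2^m), hammingDist (y k) (y (k+1)) = 1) :
    ∀ k : Fin (2 * 2^m),
      hammingDist (newCode m y k) (newCode m y (k+2)) =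
        if k.val % 2^m = 2^m - 2 ∨ k.val % 2^m = 2^m - 1 then 1 else 2 := by
  intro k
  have hp : 2 ≤ 2^m := Nat.le_self_pow (by omega) 2
  have hk2 : (k + 2 : Fin (2 * 2^m)).val = (k.val + 2) % (2 * 2^m) := by
    rw [Fin.val_add, Fin.coe_ofNat_eq_mod, Nat.add_mod_mod]
  have hparity : k.val % 2 = (k + 2 : Fin (2 * 2^m)).val % 2 := by
    rw [hk2, Nat.mod_mod_of_dvd _ (dvd_mul_right 2 _), Nat.add_mod_right]
  have hfold := dist_foldIndex_of_val_eq_add_two_mod hp hk2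
  rw [hammingDist_newCode_of_mod_two_eq m y hparity,
    hammingDist_eq_dist_of_dist_le_two hy.injective hgray, hfold] <;>
    split_ifs at hfold ⊢ <;> omega
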